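/- arXiv:2602.23402 — 4 statements merged into one kernel-verified Lean document; each statement's English description precedes it below -/
import Mathlib

section
/- Let σ > 0, ε > 0, x₀ > 0, let r ∈ ℝ be arbitrary, and let c > 0. Then the function p(x) = (x/x₀)^(-2r/σ²) * exp((2c/σ²) * (1/x - 1/x₀)) is not Lebesgue-integrable on the interval (0, ε); equivalently, its integral over (0, ε) is infinite. -/
open MeasureTheory Filter Set

/-- Let σ > 0, ε > 0, x₀ > 0, let r ∈ ℝ be arbitrary, and let
c > 0. Then the function
p(x) = (x/x₀)^(-2r/σ²) * exp((2c/σ²) * (1/x - 1/x₀))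
is not Lebesgue-integrable on the interval (0, ε); equivalently, its integral
over (0, ε) is infinite. -/
theorem stmt5 (σ ε x₀ r c : ℝ) (hσ : 0 < σ) (hε : 0 < ε) (hx₀ : 0 < x₀)
    (hc : 0 < c) :
    ¬ IntegrableOn
        (fun x : ℝ =>
          (x / x₀) ^ (-(2 * r) / σ ^ 2) *
            Real.exp ((2 * c / σ ^ 2) * (1 / x - 1 / x₀)))
        (Set.Ioo 0 ε) ∧
      ∫⁻ x in Set.Ioo (0 : ℝ) ε,
          ENNReal.ofReal
            ((x / x₀) ^ (-(2 * r) / σ ^ 2) *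
              Real.exp ((2 * c / σ ^ 2) * (1 / x - 1 / x₀))) = ⊤ := by
  set q : ℝ := -(2 * r) / σ ^ 2 with hq
  set a : ℝ := 2 * c / σ ^ 2 with ha
  set p : ℝ → ℝ := fun x => (x / x₀) ^ q * Real.exp (a * (1 / x - 1 / x₀)) with hp
  have ha0 : 0 < a := by positivity
  -- continuity / measurability of p on Ioo 0 ε
  have hcont : ContinuousOn p (Ioo 0 ε) := by
    apply ContinuousOn.mul
    · apply ContinuousOn.rpow_const (continuousOn_id.div_const x₀)
      intro x hx
      exact Or.inl (ne_of_gt (div_pos hx.1 hx₀))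
    · apply Real.continuousOn_exp.comp
      · apply ContinuousOn.mul continuousOn_const
        apply ContinuousOn.sub _ continuousOn_const
        intro x hx
        exact ((continuousAt_inv₀ (ne_of_gt hx.1)).continuousWithinAt).congr
          (fun y _ => one_div y) (one_div x)
      · exact fun x hx => mem_univ _
  have haesm : AEStronglyMeasurable p (volume.restrict (Ioo (0:ℝ) ε)) :=
    hcont.aestronglyMeasurable measurableSet_Ioo
  -- eventual lower bound machinery
  have hT : Tendsto (fun x : ℝ => a * x⁻¹ + (q + 1) * Real.log x)
      (nhdsWithin 0 (Ioi 0)) atTop := by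
    have h1 : Tendsto (fun x : ℝ => Real.log x * x ^ (1:ℝ)) (nhdsWithin 0 (Ioi 0)) (nhds 0) :=
      tendsto_log_mul_rpow_nhdsGT_zero zero_lt_one
    have h2 : Tendsto (fun x : ℝ => a + (q + 1) * (Real.log x * x))
        (nhdsWithin 0 (Ioi 0)) (nhds (a + (q+1) * 0)) := by
      have := ((h1.const_mul (q+1)).const_add a)
      simpa [Real.rpow_one] using this
    rw [mul_zero, add_zero] at h2
    have h3 : Tendsto (fun x : ℝ => x⁻¹) (nhdsWithin 0 (Ioi 0)) atTop := tendsto_inv_nhdsGT_zero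
    have h4 := h3.atTop_mul_pos ha0 h2
    refine h4.congr' ?_
    filter_upwards [self_mem_nhdsWithin] with x hx
    have hx0 : (x:ℝ) ≠ 0 := ne_of_gt hx
    field_simp
  have hev : ∀ᶠ x in nhdsWithin 0 (Ioi (0:ℝ)),
      q * Real.log x₀ + a / x₀ ≤ a * x⁻¹ + (q + 1) * Real.log x :=
    hT.eventually_ge_atTop _
  rw [eventually_nhdsWithin_iff, Metric.eventually_nhds_iff] at hev
  obtain ⟨δ₀, hδ₀0, hδ₀⟩ := hev
  set δ : ℝ := min δ₀ ε with hδdef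
  have hδ0 : 0 < δ := lt_min hδ₀0 hε
  have hδ : ∀ x ∈ Ioo (0:ℝ) δ, q * Real.log x₀ + a / x₀ ≤ a * x⁻¹ + (q + 1) * Real.log x := by
    intro x hx
    refine hδ₀ ?_ hx.1
    rw [Real.dist_eq, sub_zero, abs_of_pos hx.1]
    exact lt_of_lt_of_le hx.2 (min_le_left _ _)
  -- pointwise bound: x⁻¹ ≤ p x on (0, δ)
  have key : ∀ x ∈ Ioo (0:ℝ) δ, x⁻¹ ≤ p x := by
    intro x hx
    have hx0 : 0 < x := hx.1
    have hb := hδ x hx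
    have hrp : (x / x₀) ^ q = Real.exp (Real.log (x / x₀) * q) :=
      Real.rpow_def_of_pos (div_pos hx0 hx₀) q
    have hinv : x⁻¹ = Real.exp (-Real.log x) := by
      rw [Real.exp_neg, Real.exp_log hx0]
    rw [hp]
    simp only
    rw [hrp, ← Real.exp_add, hinv]
    apply Real.exp_le_exp.2
    rw [Real.log_div (ne_of_gt hx0) (ne_of_gt hx₀)]
    have : a * (1 / x - 1 / x₀) = a * x⁻¹ - a / x₀ := by
      field_simp
    rw [this]
    nlinarith [hb]
  -- nonnegativity of p on Ioo 0 ε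
  have hpos : ∀ x ∈ Ioo (0:ℝ) ε, 0 ≤ p x := by
    intro x hx
    exact mul_nonneg (Real.rpow_nonneg (div_pos hx.1 hx₀).le _) (Real.exp_pos _).le
  -- Part 1: not integrable
  have hnint : ¬ IntegrableOn p (Ioo 0 ε) := by
    intro hint
    have hint' : IntegrableOn p (Ioo 0 δ) :=
      hint.mono_set (Ioo_subset_Ioo le_rfl (min_le_right _ _))
    have hinv_int : IntegrableOn (fun x : ℝ => x ^ (-1 : ℝ)) (Ioo 0 δ) := by
      apply Integrable.mono hint'
      · apply ContinuousOn.aestronglyMeasurable _ measurableSet_Ioo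
        apply ContinuousOn.rpow_const continuousOn_id
        exact fun x hx => Or.inl (ne_of_gt hx.1)
      · rw [ae_restrict_iff' measurableSet_Ioo]
        filter_upwards with x hx
        rw [Real.norm_eq_abs, Real.norm_eq_abs, Real.rpow_neg_one,
          abs_of_pos (inv_pos.2 hx.1), abs_of_nonneg
            (le_trans (inv_pos.2 hx.1).le (key x hx))]
        exact key x hx
    rw [intervalIntegral.integrableOn_Ioo_rpow_iff hδ0] at hinv_int
    linarith
  refine ⟨hnint, ?_⟩
  -- Part 2: lintegral is ⊤
  by_contra htop
  apply hnint
  refine ⟨haesm, ?_⟩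
  have hnn : 0 ≤ᵐ[volume.restrict (Ioo (0:ℝ) ε)] p := by
    filter_upwards [ae_restrict_mem measurableSet_Ioo] with x hx using hpos x hx
  rw [hasFiniteIntegral_iff_ofReal hnn]
  exact lt_top_iff_ne_top.2 htop
end

section
/- Let σ > 0, ε > 0, x₀ > 0 and r, c ∈ ℝ. The function p(x) = (x/x₀)^(-2r/σ²) * exp((2c/σ²) * (1/x - 1/x₀)) is Lebesgue-integrable on (0, ε) if and only if either c < 0, or (c = 0 and r < σ²/2). -/
open MeasureTheory Set Real Nat

lemma aux_cont (a b : ℝ) :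
    ContinuousOn (fun x : ℝ => x ^ a * Real.exp (b / x)) (Set.Ioi (0:ℝ)) := by
  apply ContinuousOn.mul
  · exact ContinuousOn.rpow_const continuousOn_id (fun x hx => Or.inl (ne_of_gt hx))
  · exact Real.continuous_exp.comp_continuousOn
      (continuousOn_const.div continuousOn_id (fun x hx => ne_of_gt hx))

lemma aux (a b ε : ℝ) (hε : 0 < ε) :
    IntegrableOn (fun x : ℝ => x ^ a * Real.exp (b / x)) (Set.Ioo 0 ε) ↔
      (b < 0 ∨ (b = 0 ∧ -1 < a)) := by
  have hmeas : AEStronglyMeasurable (fun x : ℝ => x ^ a * Real.exp (b / x))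
      ((volume : Measure ℝ).restrict (Set.Ioo 0 ε)) :=
    ((aux_cont a b).mono (fun x hx => hx.1)).aestronglyMeasurable measurableSet_Ioo
  constructor
  · intro h
    rcases lt_trichotomy b 0 with hb | hb | hb
    · exact Or.inl hb
    · refine Or.inr ⟨hb, ?_⟩
      rw [← intervalIntegral.integrableOn_Ioo_rpow_iff hε (s := a)]
      refine h.congr_fun (fun x hx => ?_) measurableSet_Ioo
      simp [hb]
    · -- b > 0 : contradiction
      exfalso
      obtain ⟨n, hn⟩ := exists_nat_ge (a + 1)
      have key : IntegrableOn (fun x : ℝ => x ^ (a - n)) (Set.Ioo 0 ε) := by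
        refine Integrable.mono' (h.const_mul (n ! / b ^ n))
          (((aux_cont (a - n) 0).mono (fun x hx => hx.1)).aestronglyMeasurable
            measurableSet_Ioo |>.congr ?_) ?_
        · filter_upwards [ae_restrict_mem measurableSet_Ioo] with x hx
          simp
        · filter_upwards [ae_restrict_mem measurableSet_Ioo] with x hx
          have hx0 : 0 < x := hx.1
          have hexp : (b / x) ^ n / n ! ≤ Real.exp (b / x) :=
            Real.pow_div_factorial_le_exp _ (by positivity) n
          have h1 : x ^ (a - (n:ℝ)) = x ^ a * x ^ (-(n:ℝ)) := by
            rw [← Real.rpow_add hx0]; ring_nf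
          rw [Real.norm_eq_abs, abs_of_nonneg (Real.rpow_nonneg hx0.le _)]
          have h2 : (b / x) ^ n = b ^ n * x ^ (-(n:ℝ)) := by
            rw [div_pow, Real.rpow_neg hx0.le, Real.rpow_natCast]
            ring
          have hfac : (0:ℝ) < n ! := by positivity
          have hbn : (0:ℝ) < b ^ n := by positivity
          have hxn : (0:ℝ) < x ^ (-(n:ℝ)) := Real.rpow_pos_of_pos hx0 _
          have hxa : (0:ℝ) < x ^ a := Real.rpow_pos_of_pos hx0 _
          calc x ^ (a - (n:ℝ)) = x ^ a * x ^ (-(n:ℝ)) := h1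
            _ = (n ! / b ^ n) * (x ^ a * (b ^ n * x ^ (-(n:ℝ)) / n !)) := by
                field_simp
            _ ≤ (n ! / b ^ n) * (x ^ a * Real.exp (b / x)) := by
                apply mul_le_mul_of_nonneg_left _ (by positivity)
                apply mul_le_mul_of_nonneg_left _ hxa.le
                rw [← h2]; exact hexp
      rw [intervalIntegral.integrableOn_Ioo_rpow_iff hε] at key
      push_cast at key
      linarith
  · rintro (hb | ⟨hb, ha⟩)
    · -- b < 0 : bounded
      obtain ⟨n, hn⟩ := exists_nat_ge (-a)
      set C : ℝ := n ! / (-b) ^ n * (max 1 ε) ^ (a + n) with hC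
      refine Integrable.mono'
        (integrableOn_const (C := C) measure_Ioo_lt_top.ne) hmeas ?_
      filter_upwards [ae_restrict_mem measurableSet_Ioo] with x hx
      have hx0 : 0 < x := hx.1
      have hnb : (0:ℝ) < -b := by linarith
      have hexp : Real.exp (b / x) ≤ n ! / (-b) ^ n * x ^ (n:ℝ) := by
        have h1 : (-b / x) ^ n / n ! ≤ Real.exp (-b / x) :=
          Real.pow_div_factorial_le_exp _ (by positivity) n
        have h2 : Real.exp (b / x) = (Real.exp (-b / x))⁻¹ := by
          rw [← Real.exp_neg]; ring_nf
        rw [h2]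
        rw [inv_le_iff_one_le_mul₀ (Real.exp_pos _)]
        calc (1:ℝ) = (n ! / (-b)^n * x ^ (n:ℝ)) * ((-b/x)^n / n !) := by
              rw [Real.rpow_natCast, div_pow]
              field_simp
            _ ≤ (n ! / (-b)^n * x ^ (n:ℝ)) * Real.exp (-b / x) := by
              apply mul_le_mul_of_nonneg_left h1
              positivity
      have hpos : (0:ℝ) < x ^ a := Real.rpow_pos_of_pos hx0 _
      rw [Real.norm_eq_abs, abs_of_nonneg (by positivity)]
      calc x ^ a * Real.exp (b / x) ≤ x ^ a * (n ! / (-b) ^ n * x ^ (n:ℝ)) :=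
            mul_le_mul_of_nonneg_left hexp hpos.le
        _ = n ! / (-b) ^ n * x ^ (a + n) := by
            rw [Real.rpow_add hx0]; ring
        _ ≤ C := by
            rw [hC]
            apply mul_le_mul_of_nonneg_left _ (by positivity)
            apply Real.rpow_le_rpow hx0.le (hx.2.le.trans (le_max_right 1 ε))
            linarith
    · rw [show (fun x : ℝ => x ^ a * Real.exp (b / x)) = fun x : ℝ => x ^ a * Real.exp (0 / x)
        from by rw [hb]]
      refine ((intervalIntegral.integrableOn_Ioo_rpow_iff hε).mpr ha).congr_fun (fun x hx => ?_)
        measurableSet_Ioo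
      simp

/-- Let σ > 0, ε > 0, x₀ > 0 and r, c ∈ ℝ. The function
p(x) = (x/x₀)^(-2r/σ²) * exp((2c/σ²) * (1/x - 1/x₀)) is Lebesgue-integrable
on (0, ε) if and only if either c < 0, or (c = 0 and r < σ²/2). -/
theorem stmt6 (σ ε x₀ r c : ℝ) (hσ : 0 < σ) (hε : 0 < ε) (hx₀ : 0 < x₀) :
    IntegrableOn
      (fun x : ℝ =>
        (x / x₀) ^ (-(2 * r) / σ ^ 2) *
          Real.exp ((2 * c / σ ^ 2) * (1 / x - 1 / x₀)))
      (Set.Ioo 0 ε) ↔ (c < 0 ∨ (c = 0 ∧ r < σ ^ 2 / 2)) := by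
  have hσ2 : (0:ℝ) < σ ^ 2 := by positivity
  set a : ℝ := -(2 * r) / σ ^ 2 with ha
  set b : ℝ := 2 * c / σ ^ 2 with hb
  set K : ℝ := (x₀ ^ a)⁻¹ * Real.exp (-(b / x₀)) with hK
  have hKpos : 0 < K := by
    have := Real.rpow_pos_of_pos hx₀ a
    positivity
  have heq : ∀ x ∈ Set.Ioo (0:ℝ) ε,
      (x / x₀) ^ a * Real.exp (b * (1 / x - 1 / x₀)) =
        K * (x ^ a * Real.exp (b / x)) := by
    intro x hx
    have hx0 : 0 < x := hx.1
    rw [Real.div_rpow hx0.le hx₀.le, hK]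
    rw [show b * (1 / x - 1 / x₀) = b / x + (-(b / x₀)) by field_simp; ring,
      Real.exp_add]
    field_simp
  rw [IntegrableOn, integrable_congr
    (Filter.eventuallyEq_of_mem (self_mem_ae_restrict measurableSet_Ioo) heq),
    integrable_const_mul_iff (isUnit_iff_ne_zero.mpr hKpos.ne'), ← IntegrableOn,
    aux a b ε hε]
  constructor
  · rintro (h | ⟨h1, h2⟩)
    · left
      rw [hb, div_neg_iff] at h
      rcases h with ⟨h, _⟩ | ⟨h, h'⟩
      · linarith
      · linarith
    · right
      constructor
      · have : 2 * c = 0 := by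
          rw [hb, div_eq_zero_iff] at h1; rcases h1 with h1 | h1 <;> linarith
        linarith
      · rw [ha, lt_div_iff₀ hσ2] at h2
        linarith
  · rintro (h | ⟨h1, h2⟩)
    · left
      rw [hb]
      apply div_neg_of_neg_of_pos (by linarith) hσ2
    · right
      refine ⟨by rw [hb, h1]; ring, ?_⟩
      rw [ha, lt_div_iff₀ hσ2]
      linarith
end

section
/- For h ≥ 0 define the normalised adaptive weights ω̃_E(h) = (2h+1)/(3(h+1)), ω̃_H(h) = 1/3, ω̃_P(h) = 1/(3(h+1)), and for a state X = (E, H, P) define Φ_h(X) = ω̃_E(h)*E + ω̃_H(h)*H + ω̃_P(h)*P. Let X₁ = (1, 1/10, 15/2), X₂ = (1, 1, 6), X₃ = (2, 5, 1/2). Then Φ_1(X₂) > Φ_1(X₁) and Φ_5(X₃) > Φ_5(X₂), yet Φ_{1/10}(X₃) < Φ_{1/10}(X₁). Hence the development relation induced by the reflexive evaluation functional, in which each step is assessed with the weights prevailing at the destination capability level, is not transitive. -/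
/-- Normalised adaptive weight on the Earth component: ω̃_E(h) = (2h+1)/(3(h+1)). -/
noncomputable def wE (h : ℝ) : ℝ := (2 * h + 1) / (3 * (h + 1))

/-- Normalised adaptive weight on the Human component: ω̃_H(h) = 1/3. -/
noncomputable def wH (_h : ℝ) : ℝ := 1 / 3

/-- Normalised adaptive weight on the Production component: ω̃_P(h) = 1/(3(h+1)). -/
noncomputable def wP (h : ℝ) : ℝ := 1 / (3 * (h + 1))

/-- Evaluation functional at capability weight level h on a state (E, H, P). -/
noncomputable def Phi (h : ℝ) (X : ℝ × ℝ × ℝ) : ℝ :=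
  wE h * X.1 + wH h * X.2.1 + wP h * X.2.2

/-- With the states X₁ = (1, 1/10, 15/2), X₂ = (1, 1, 6),
X₃ = (2, 5, 1/2), one has Φ_1(X₂) > Φ_1(X₁) and Φ_5(X₃) > Φ_5(X₂), yet
Φ_{1/10}(X₃) < Φ_{1/10}(X₁): the development relation, assessed at the
destination capability level's weights, is not transitive. -/
theorem stmt8 :
    Phi 1 (1, 1, 6) > Phi 1 (1, 1 / 10, 15 / 2) ∧
    Phi 5 (2, 5, 1 / 2) > Phi 5 (1, 1, 6) ∧
    Phi (1 / 10) (2, 5, 1 / 2) < Phi (1 / 10) (1, 1 / 10, 15 / 2) := by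
  refine ⟨?_, ?_, ?_⟩ <;> · simp only [Phi, wE, wH, wP]; norm_num
end

section
/- Let n ≥ 1, let c > 0 and C > 0, let σ : Fin n → ℝ, and let μ : ℝⁿ → ℝⁿ be a function such that for every x in the nonnegative orthant (x_i ≥ 0 for all i) and every index i, μ_i(x) ≤ -c * x_i² + C * (1 + ‖x‖), where ‖·‖ is the Euclidean norm. Then there exist constants C₁ > 0 and C₂ > 0 such that for every x in the nonnegative orthant, ∑_i (2 * x_i * μ_i(x) + σ_i² * x_i²) ≤ C₁ - C₂ * ∑_i x_i². -/
/-- One-variable cubic absorption: for `t ≥ 0`,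
`-(2c) t³ + 2C t + D t² ≤ (C + (D+C+1)³/(2c)²) - t²`. -/
lemma stmt15_aux (c C D t : ℝ) (hc : 0 < c) (hC : 0 < C) (hD : 0 ≤ D) (ht : 0 ≤ t) :
    -(2*c)*t^3 + 2*C*t + D*t^2 ≤ (C + (D + C + 1)^3/(2*c)^2) - t^2 := by
  set a := 2*c with ha
  have ha0 : 0 < a := by positivity
  set E := D + C + 1 with hE
  have hE0 : 0 < E := by positivity
  clear_value a E
  have h1 : 2*C*t ≤ C*t^2 + C := by nlinarith [sq_nonneg (t - 1)]
  have h2 : E*t^2 - a*t^3 ≤ E^3/a^2 := by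
    rw [le_div_iff₀ (by positivity)]
    nlinarith [mul_nonneg (mul_nonneg ha0.le ht) (sq_nonneg (a*t - E)),
      mul_nonneg hE0.le (sq_nonneg (a*t - E/2)), mul_pos hE0 (mul_pos hE0 hE0),
      mul_nonneg ha0.le ht]
  nlinarith [h1, h2]

/-- Let n ≥ 1, c > 0, C > 0, σ : Fin n → ℝ, and let
μ : ℝⁿ → ℝⁿ satisfy μ_i(x) ≤ -c*x_i² + C*(1 + ‖x‖) on the nonnegative
orthant (Euclidean norm). Then there exist C₁ > 0, C₂ > 0 such that for every
x in the nonnegative orthant, ∑_i (2*x_i*μ_i(x) + σ_i²*x_i²) ≤ C₁ - C₂*∑_i x_i². -/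
theorem stmt15 (n : ℕ) (hn : 1 ≤ n) (c C : ℝ) (hc : 0 < c) (hC : 0 < C)
    (σ : Fin n → ℝ)
    (μ : EuclideanSpace ℝ (Fin n) → EuclideanSpace ℝ (Fin n))
    (hμ : ∀ x : EuclideanSpace ℝ (Fin n), (∀ i, 0 ≤ x i) →
      ∀ i, μ x i ≤ -c * (x i) ^ 2 + C * (1 + ‖x‖)) :
    ∃ C₁ C₂ : ℝ, 0 < C₁ ∧ 0 < C₂ ∧
      ∀ x : EuclideanSpace ℝ (Fin n), (∀ i, 0 ≤ x i) →
        ∑ i, (2 * x i * μ x i + (σ i) ^ 2 * (x i) ^ 2) ≤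
          C₁ - C₂ * ∑ i, (x i) ^ 2 := by
  refine ⟨(∑ i : Fin n,
      (C + ((σ i)^2 + (n+1)*C + C + 1)^3/(2*c)^2)) + 1, 1, ?_, one_pos, ?_⟩
  · have : ∀ i ∈ Finset.univ (α := Fin n),
        0 ≤ C + ((σ i)^2 + (n+1)*C + C + 1)^3/(2*c)^2 := by
      intro i _; positivity
    have := Finset.sum_nonneg this
    linarith
  intro x hx
  have hn0 : (0:ℝ) ≤ ‖x‖ := norm_nonneg x
  have hnorm : ‖x‖^2 = ∑ i, (x i)^2 := by
    rw [EuclideanSpace.norm_eq, Real.sq_sqrt (by positivity)]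
    simp [sq_abs]
  -- Step 1: per-index bound keeping the norm term
  have step : ∀ i, 2 * x i * μ x i + (σ i)^2 * (x i)^2 ≤
      -(2*c)*(x i)^3 + 2*C*(x i) + ((σ i)^2 + C)*(x i)^2 + C*‖x‖^2 := by
    intro i
    have h1 : 2 * x i * μ x i ≤ 2 * x i * (-c * (x i)^2 + C*(1 + ‖x‖)) := by
      have := hμ x hx i
      have h2 : 0 ≤ 2 * x i := by linarith [hx i]
      nlinarith
    nlinarith [sq_nonneg (x i - ‖x‖), hx i, hn0, hC.le]
  -- Step 2: single-variable absorption per index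
  have per : ∀ i, -(2*c)*(x i)^3 + 2*C*(x i) + ((σ i)^2 + C)*(x i)^2
        + C*(n:ℝ)*(x i)^2 ≤
      (C + ((σ i)^2 + (n+1)*C + C + 1)^3/(2*c)^2) - (x i)^2 := by
    intro i
    have := stmt15_aux c C ((σ i)^2 + (n+1)*C) (x i) hc hC (by positivity) (hx i)
    nlinarith [this]
  calc ∑ i, (2 * x i * μ x i + (σ i)^2 * (x i)^2)
      ≤ ∑ i, (-(2*c)*(x i)^3 + 2*C*(x i) + ((σ i)^2 + C)*(x i)^2 + C*‖x‖^2) :=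
        Finset.sum_le_sum fun i _ => step i
    _ = ∑ i, (-(2*c)*(x i)^3 + 2*C*(x i) + ((σ i)^2 + C)*(x i)^2
          + C*(n:ℝ)*(x i)^2) := by
        rw [Finset.sum_add_distrib, Finset.sum_const, Finset.card_univ,
          Fintype.card_fin, nsmul_eq_mul, hnorm, Finset.mul_sum,
          Finset.mul_sum, ← Finset.sum_add_distrib]
        exact Finset.sum_congr rfl fun i _ => by ring
    _ ≤ ∑ i, ((C + ((σ i)^2 + (n+1)*C + C + 1)^3/(2*c)^2) - (x i)^2) :=
        Finset.sum_le_sum fun i _ => per i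
    _ = (∑ i : Fin n, (C + ((σ i)^2 + (n+1)*C + C + 1)^3/(2*c)^2))
          - ∑ i, (x i)^2 := Finset.sum_sub_distrib _ _
    _ ≤ (∑ i : Fin n, (C + ((σ i)^2 + (n+1)*C + C + 1)^3/(2*c)^2)) + 1
          - 1 * ∑ i, (x i)^2 := by linarith
end
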